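/- Conversely, if U ∈ GL_d(ℤ), V is any d×(m−1) integer matrix, and W is a linear map of ℝ^{m−1} permuting the set E (extended affinely so that W maps E−E bijectively to E−E), then the block matrix T = [[U, V],[0, W]] satisfies T(M) = M where M = ℤ^d × (E−E). -/

import Mathlib

/-!
`T` is block upper triangular. On the second block it acts as `W`, which permutes `E − E`;
over a fixed `w ∈ E − E`, which is an integer vector, the first block is the affine map
`z ↦ U z + V w` of `ℤ^d`, a bijection because `U` is unimodular.
-/

open Matrix

/-- The set `E ⊂ ℤ^{m-1}`: the zero vector together with the standard basis. -/
def Eset (m : ℕ) : Set (Fin (m - 1) → ℤ) :=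
  insert 0 {v | ∃ i, v = Pi.single i 1}

/-- `E − E` as a set of real vectors. -/
def EmEℝ (m : ℕ) : Set (Fin (m - 1) → ℝ) :=
  {x | ∃ a ∈ Eset m, ∃ b ∈ Eset m, x = fun j => ((a j : ℝ) - (b j : ℝ))}

/-- `M = ℤ^d × (E−E)` as a set of real vectors in `ℝ^{d+m-1}`. -/
def MsetR (d m : ℕ) : Set (Fin d ⊕ Fin (m - 1) → ℝ) :=
  {k | (∀ i, ∃ z : ℤ, k (Sum.inl i) = (z : ℝ)) ∧ (fun j => k (Sum.inr j)) ∈ EmEℝ m}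

section IntLatticeProd

variable {κ ι : Type*}

/-- `MsetR d m` is the case `S = E − E`. -/
def intLatticeProd (κ : Type*) (S : Set (ι → ℝ)) : Set (κ ⊕ ι → ℝ) :=
  {k | (∀ i, ∃ z : ℤ, k (Sum.inl i) = (z : ℝ)) ∧ (fun j => k (Sum.inr j)) ∈ S}

theorem sumElim_intCast_mem_intLatticeProd {S : Set (ι → ℝ)} (z : κ → ℤ) {x : ι → ℝ} :
    Sum.elim (Int.cast ∘ z) x ∈ intLatticeProd κ S ↔ x ∈ S :=
  ⟨fun h => h.2, fun hx => ⟨fun i => ⟨z i, rfl⟩, hx⟩⟩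

theorem exists_eq_sumElim_of_mem_intLatticeProd {S : Set (ι → ℝ)} {k : κ ⊕ ι → ℝ}
    (hk : k ∈ intLatticeProd κ S) :
    ∃ z : κ → ℤ, ∃ x ∈ S, k = Sum.elim (Int.cast ∘ z) x := by
  choose z hz using hk.1
  exact ⟨z, _, hk.2, funext fun | .inl i => hz i | .inr _ => rfl⟩

theorem map_intCast_mulVec_intCast [Fintype ι] (A : Matrix κ ι ℤ) (v : ι → ℤ) :
    A.map (Int.cast : ℤ → ℝ) *ᵥ (Int.cast ∘ v) = Int.cast ∘ (A *ᵥ v) :=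
  funext fun i => ((Int.castRingHom ℝ).map_mulVec A v i).symm

theorem fromBlocks_zero_mulVec_sumElim_intCast [Fintype κ] [Fintype ι] (U : Matrix κ κ ℤ)
    (V : Matrix κ ι ℤ) (W : Matrix ι ι ℝ) (z : κ → ℤ) (w : ι → ℤ) :
    fromBlocks (U.map Int.cast) (V.map Int.cast) 0 W *ᵥ Sum.elim (Int.cast ∘ z) (Int.cast ∘ w) =
      Sum.elim (Int.cast ∘ (U *ᵥ z + V *ᵥ w)) (W *ᵥ (Int.cast ∘ w)) := by
  rw [fromBlocks_mulVec, Sum.elim_comp_inl, Sum.elim_comp_inr, zero_mulVec, zero_add,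
    map_intCast_mulVec_intCast, map_intCast_mulVec_intCast]
  congr 1
  funext i
  simp

theorem fromBlocks_image_intLatticeProd [Fintype κ] [Fintype ι] [DecidableEq κ]
    (U : Matrix κ κ ℤ) (hU : IsUnit U.det) (V : Matrix κ ι ℤ) (W : Matrix ι ι ℝ)
    {S : Set (ι → ℝ)} (hS : S ⊆ Set.range (Int.cast ∘ · : (ι → ℤ) → ι → ℝ))
    (hW : Set.BijOn (W *ᵥ ·) S S) :
    (fromBlocks (U.map Int.cast) (V.map Int.cast) 0 W *ᵥ ·) '' intLatticeProd κ S =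
      intLatticeProd κ S := by
  ext y
  constructor
  · rintro ⟨k, hk, rfl⟩
    obtain ⟨z, x, hx, rfl⟩ := exists_eq_sumElim_of_mem_intLatticeProd hk
    obtain ⟨w, rfl⟩ := hS hx
    beta_reduce
    rw [fromBlocks_zero_mulVec_sumElim_intCast, sumElim_intCast_mem_intLatticeProd]
    exact hW.mapsTo hx
  · intro hy
    obtain ⟨z, x', hx', rfl⟩ := exists_eq_sumElim_of_mem_intLatticeProd hy
    obtain ⟨x, hx, rfl⟩ := hW.surjOn hx'
    obtain ⟨w, rfl⟩ := hS hx
    refine ⟨Sum.elim (Int.cast ∘ (U⁻¹ *ᵥ (z - V *ᵥ w))) (Int.cast ∘ w),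
      (sumElim_intCast_mem_intLatticeProd _).2 hx, ?_⟩
    beta_reduce
    rw [fromBlocks_zero_mulVec_sumElim_intCast, mulVec_mulVec, mul_nonsing_inv U hU, one_mulVec,
      sub_add_cancel]

end IntLatticeProd

theorem EmEℝ_subset_range_intCast (m : ℕ) :
    EmEℝ m ⊆ Set.range (Int.cast ∘ · : (Fin (m - 1) → ℤ) → Fin (m - 1) → ℝ) := by
  rintro _ ⟨a, -, b, -, rfl⟩
  exact ⟨a - b, by ext j; simp⟩

/-- conversely, if `U ∈ GL_d(ℤ)`, `V` is an integer matrix, and the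
linear map `W` maps `E−E` bijectively onto itself, then
`T = [[U, V],[0, W]]` satisfies `T(M) = M`. -/
theorem stmt_4 (d m : ℕ) (U : Matrix (Fin d) (Fin d) ℤ) (hU : IsUnit U.det)
    (V : Matrix (Fin d) (Fin (m - 1)) ℤ)
    (W : Matrix (Fin (m - 1)) (Fin (m - 1)) ℝ)
    (hW : Set.BijOn (fun x => W.mulVec x) (EmEℝ m) (EmEℝ m)) :
    (fun k => (Matrix.fromBlocks (U.map (Int.cast : ℤ → ℝ)) (V.map (Int.cast : ℤ → ℝ))
        (0 : Matrix (Fin (m - 1)) (Fin d) ℝ) W).mulVec k) '' MsetR d m = MsetR d m :=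
  fromBlocks_image_intLatticeProd U hU V W (EmEℝ_subset_range_intCast m) hW
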